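/- Let M ≥ 1 and h ≥ 1 be integers, ρ̲ₛ, ρ̄ₛ ∈ [0,1] for each mode s, and γ : (Fin M)^h → ℝ arbitrary coefficients with γ'_z = max_{q ∈ 𝓜^{h,z}} γ_q for z ∈ Z_h. For every ρ' in the LP2 feasible set F'_h there exists ρ in the LP1 feasible set F_h such that Σ_{q ∈ (Fin M)^h} γ_q · ρ_q = Σ_{z ∈ Z_h} γ'_z · ρ'_z; concretely, choosing for each z ∈ Z_h some q^{(z)} ∈ argmax_{q ∈ 𝓜^{h,z}} γ_q and setting ρ_{q^{(z)}} = ρ'_z and ρ_q = 0 for q ∈ 𝓜^{h,z} \ {q^{(z)}} yields such a ρ. -/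
import Mathlib


noncomputable section

/-- `modeCount M h s q` is `c_s(q)`: the number of indices `j` with `q j = s`. -/
def modeCount (M h : ℕ) (s : Fin M) (q : Fin h → Fin M) : ℕ :=
  (Finset.univ.filter fun j : Fin h => q j = s).card

/-- The LP1 feasible set `F_h`. -/
def FeasLP1 (M h : ℕ) (ρlo ρhi : Fin M → ℝ) (ρ : (Fin h → Fin M) → ℝ) : Prop :=
  (∀ q, ρ q ∈ Set.Icc (0 : ℝ) 1) ∧ (∑ q : Fin h → Fin M, ρ q = 1) ∧
  ∀ s : Fin M,
    ρlo s ≤ (∑ q : Fin h → Fin M, ((modeCount M h s q : ℝ) / (h : ℝ)) * ρ q) ∧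
    (∑ q : Fin h → Fin M, ((modeCount M h s q : ℝ) / (h : ℝ)) * ρ q) ≤ ρhi s

/-- `Z_h`: the finite set of `M`-tuples `z` of nonnegative integers with `Σ_s z_s = h`. -/
def Zset (M h : ℕ) : Finset (Fin M → ℕ) := Finset.Nat.antidiagonalTuple M h

/-- The LP2 feasible set `F'_h`. -/
def FeasLP2 (M h : ℕ) (ρlo ρhi : Fin M → ℝ) (ρ' : (Fin M → ℕ) → ℝ) : Prop :=
  (∀ z ∈ Zset M h, ρ' z ∈ Set.Icc (0 : ℝ) 1) ∧ (∑ z ∈ Zset M h, ρ' z = 1) ∧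
  ∀ s : Fin M,
    ρlo s ≤ (∑ z ∈ Zset M h, ((z s : ℝ) / (h : ℝ)) * ρ' z) ∧
    (∑ z ∈ Zset M h, ((z s : ℝ) / (h : ℝ)) * ρ' z) ≤ ρhi s

/-- `γ'_z = max_{q ∈ 𝓜^{h,z}} γ_q`, where `𝓜^{h,z} = {q : c_s(q) = z_s for all s}`. -/
def gammaMax (M h : ℕ) (γ : (Fin h → Fin M) → ℝ) (z : Fin M → ℕ) : ℝ :=
  sSup (γ '' {q : Fin h → Fin M | ∀ s : Fin M, modeCount M h s q = z s})

private lemma zq_mem_aux (M h : ℕ) (q : Fin h → Fin M) :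
    (fun s => modeCount M h s q) ∈ Zset M h := by
  rw [Zset, Finset.Nat.mem_antidiagonalTuple]
  simp only [modeCount]
  rw [← Finset.card_eq_sum_card_fiberwise (fun x _ => Finset.mem_univ (q x))]
  simp

private lemma key_sum_aux (M h : ℕ) (Q : (Fin M → ℕ) → (Fin h → Fin M))
    (hQ : ∀ z ∈ Zset M h, ∀ s, modeCount M h s (Q z) = z s)
    (g : (Fin M → ℕ) → ℝ) :
    ∑ q : Fin h → Fin M,
      (if Q (fun s => modeCount M h s q) = q then g (fun s => modeCount M h s q) else 0)
      = ∑ z ∈ Zset M h, g z := by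
  rw [← Finset.sum_filter]
  refine Finset.sum_nbij' (fun q => (fun s => modeCount M h s q)) Q ?_ ?_ ?_ ?_ ?_
  · intro q _; exact zq_mem_aux M h q
  · intro z hz
    simp only [Finset.mem_filter, Finset.mem_univ, true_and]
    have : (fun s => modeCount M h s (Q z)) = z := funext (hQ z hz)
    rw [this]
  · intro q hq
    simp only [Finset.mem_filter] at hq
    exact hq.2
  · intro z hz
    exact funext (hQ z hz)
  · intro q _; rfl

private lemma gammaMax_eq_aux (M h : ℕ) (γ : (Fin h → Fin M) → ℝ)
    (Q : (Fin M → ℕ) → (Fin h → Fin M)) (z : Fin M → ℕ) (hz : z ∈ Zset M h)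
    (hQmem : ∀ z ∈ Zset M h, ∀ s : Fin M, modeCount M h s (Q z) = z s)
    (hQmax : ∀ z ∈ Zset M h, ∀ q : Fin h → Fin M,
      (∀ s : Fin M, modeCount M h s q = z s) → γ q ≤ γ (Q z)) :
    gammaMax M h γ z = γ (Q z) := by
  apply IsGreatest.csSup_eq
  constructor
  · exact ⟨Q z, hQmem z hz, rfl⟩
  · rintro x ⟨q, hq, rfl⟩
    exact hQmax z hz q hq

/-- **Second half of the proof of Lemma 4 of the paper.**  Let `ρ' ∈ F'_h` and, for
each `z ∈ Z_h`, let `Q z ∈ argmax_{q ∈ 𝓜^{h,z}} γ_q`.  Then the function `ρ` obtained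
by setting `ρ_{Q z} = ρ'_z` and `ρ_q = 0` for `q ∈ 𝓜^{h,z} \ {Q z}` belongs to `F_h`
and satisfies `Σ_q γ_q·ρ_q = Σ_z γ'_z·ρ'_z`; in particular such a `ρ ∈ F_h` exists. -/
theorem stmt_7 (M h : ℕ) (hM : 1 ≤ M) (hh : 1 ≤ h)
    (ρlo ρhi : Fin M → ℝ)
    (hlo01 : ∀ s, ρlo s ∈ Set.Icc (0 : ℝ) 1) (hhi01 : ∀ s, ρhi s ∈ Set.Icc (0 : ℝ) 1)
    (γ : (Fin h → Fin M) → ℝ)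
    (ρ' : (Fin M → ℕ) → ℝ) (hρ' : FeasLP2 M h ρlo ρhi ρ')
    (Q : (Fin M → ℕ) → (Fin h → Fin M))
    (hQmem : ∀ z ∈ Zset M h, ∀ s : Fin M, modeCount M h s (Q z) = z s)
    (hQmax : ∀ z ∈ Zset M h, ∀ q : Fin h → Fin M,
      (∀ s : Fin M, modeCount M h s q = z s) → γ q ≤ γ (Q z)) :
    (FeasLP1 M h ρlo ρhi
        (fun q => if Q (fun s => modeCount M h s q) = q
          then ρ' (fun s => modeCount M h s q) else 0) ∧
      (∑ q : Fin h → Fin M, γ q *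
          (if Q (fun s => modeCount M h s q) = q
            then ρ' (fun s => modeCount M h s q) else 0))
        = ∑ z ∈ Zset M h, gammaMax M h γ z * ρ' z) ∧
    ∃ ρ : (Fin h → Fin M) → ℝ, FeasLP1 M h ρlo ρhi ρ ∧
      (∑ q : Fin h → Fin M, γ q * ρ q) = ∑ z ∈ Zset M h, gammaMax M h γ z * ρ' z := by
  obtain ⟨hρ'1, hρ'2, hρ'3⟩ := hρ'
  have hfeas : FeasLP1 M h ρlo ρhi
      (fun q => if Q (fun s => modeCount M h s q) = q
        then ρ' (fun s => modeCount M h s q) else 0) := by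
    refine ⟨?_, ?_, ?_⟩
    · intro q
      simp only
      split
      · exact hρ'1 _ (zq_mem_aux M h q)
      · exact ⟨le_refl 0, zero_le_one⟩
    · rw [key_sum_aux M h Q hQmem ρ', hρ'2]
    · intro s
      have hc : (∑ q : Fin h → Fin M, ((modeCount M h s q : ℝ) / (h : ℝ)) *
          (if Q (fun s => modeCount M h s q) = q then ρ' (fun s => modeCount M h s q) else 0))
          = ∑ z ∈ Zset M h, ((z s : ℝ) / (h : ℝ)) * ρ' z := by
        rw [← key_sum_aux M h Q hQmem (fun z => ((z s : ℝ) / (h : ℝ)) * ρ' z)]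
        simp only [mul_ite, mul_zero]
      rw [hc]
      exact hρ'3 s
  have hobj : (∑ q : Fin h → Fin M, γ q *
      (if Q (fun s => modeCount M h s q) = q then ρ' (fun s => modeCount M h s q) else 0))
      = ∑ z ∈ Zset M h, gammaMax M h γ z * ρ' z := by
    rw [← key_sum_aux M h Q hQmem (fun z => gammaMax M h γ z * ρ' z)]
    apply Finset.sum_congr rfl
    intro q _
    by_cases hc : Q (fun s => modeCount M h s q) = q
    · simp only [hc, if_true]
      rw [gammaMax_eq_aux M h γ Q _ (zq_mem_aux M h q) hQmem hQmax, hc]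
    · simp [hc]
  exact ⟨⟨hfeas, hobj⟩, _, hfeas, hobj⟩


end
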